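/- arXiv:1609.08795 — 3 statements merged into one kernel-verified Lean document; each statement's English description precedes it below -/
import Mathlib

section
/- If N is a quasiperfect number, i.e., σ(N) = 2N + 1, then N is an odd perfect square. -/
/-- sum-of-divisors function -/
def sigma (n : ℕ) : ℕ := ∑ d ∈ n.divisors, d

open Finset

lemma geom2 (n : ℕ) : ∑ i ∈ Finset.range n, 2 ^ i = 2 ^ n - 1 := by
  induction n with
  | zero => simp
  | succ n ih =>
    have h1 : 1 ≤ 2 ^ n := Nat.one_le_two_pow
    rw [Finset.sum_range_succ, ih, pow_succ]
    omega

lemma isSquare_of_even_factorization {n : ℕ} (hn : n ≠ 0)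
    (h : ∀ p, Even (n.factorization p)) : IsSquare n := by
  rw [← Nat.factorization_prod_pow_eq_self hn, Finsupp.prod]
  exact Finset.isSquare_prod _ fun p _ => by
    obtain ⟨c, hc⟩ := h p
    exact ⟨p ^ c, by rw [hc, ← pow_add]⟩

lemma square_of_odd_card_divisors {n : ℕ} (hn : n ≠ 0)
    (h : Odd n.divisors.card) : IsSquare n := by
  rw [Nat.card_divisors hn] at h
  apply isSquare_of_even_factorization hn
  intro p
  by_cases hp : p ∈ n.primeFactors
  · have hd : (n.factorization p + 1) ∣ n.primeFactors.prod (n.factorization · + 1) :=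
      Finset.dvd_prod_of_mem _ hp
    rw [Nat.odd_iff] at h
    have h2 : ¬ 2 ∣ (n.factorization p + 1) := fun h2 => by
      have := h2.trans hd
      omega
    rcases Nat.even_or_odd (n.factorization p) with he | ho
    · exact he
    · exfalso; rw [Nat.odd_iff] at ho; omega
  · have : n.factorization p = 0 := by
      rw [← Finsupp.notMem_support_iff, Nat.support_factorization]
      exact hp
    simp [this]

lemma odd_divisors_eq {N : ℕ} (hN : N ≠ 0) :
    N.divisors.filter (fun d => Odd d) = (ordCompl[2] N).divisors := by
  have hm0 : ordCompl[2] N ≠ 0 := (Nat.ordCompl_pos 2 hN).ne'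
  ext d
  simp only [Finset.mem_filter, Nat.mem_divisors]
  constructor
  · rintro ⟨⟨hdN, _⟩, hodd⟩
    refine ⟨?_, hm0⟩
    have hnd : ¬ 2 ∣ d := by rw [Nat.odd_iff] at hodd; omega
    have hco : Nat.Coprime d (2 ^ N.factorization 2) :=
      Nat.Coprime.pow_right _ (((Nat.Prime.coprime_iff_not_dvd Nat.prime_two).mpr hnd).symm)
    have hdd : d ∣ ordCompl[2] N * 2 ^ N.factorization 2 := by
      rw [mul_comm, Nat.ordProj_mul_ordCompl_eq_self]
      exact hdN
    exact hco.dvd_of_dvd_mul_right hdd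
  · rintro ⟨hd, _⟩
    refine ⟨⟨hd.trans (Nat.ordCompl_dvd N 2), hN⟩, ?_⟩
    have h2 : ¬ 2 ∣ ordCompl[2] N := Nat.not_dvd_ordCompl Nat.prime_two hN
    rw [Nat.odd_iff]
    rcases Nat.even_or_odd d with he | ho
    · exfalso
      rw [Nat.even_iff] at he
      exact h2 ((by omega : 2 ∣ d).trans hd)
    · exact Nat.odd_iff.mp ho

lemma exists_prime_4 : ∀ n : ℕ, n % 4 = 3 → ∃ p, p.Prime ∧ p ∣ n ∧ p % 4 = 3 := by
  intro n
  induction n using Nat.strong_induction_on with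
  | _ n ih =>
    intro hn
    have hn1 : n ≠ 1 := by omega
    have hp := Nat.minFac_prime hn1
    have hpd : n.minFac ∣ n := Nat.minFac_dvd n
    have hp2 : n.minFac % 2 = 1 := by
      have hne : n.minFac ≠ 2 := fun h2 => by
        have : ¬ 2 ∣ n := by omega
        exact this (h2 ▸ hpd)
      exact Nat.odd_iff.mp (hp.odd_of_ne_two hne)
    by_cases hp4 : n.minFac % 4 = 3
    · exact ⟨n.minFac, hp, hpd, hp4⟩
    · obtain ⟨t, ht⟩ := hpd
      have ht0 : t ≠ 0 := by rintro rfl; omega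
      have htlt : t < n := by
        rw [ht]
        nlinarith [hp.two_le, Nat.pos_of_ne_zero ht0]
      have hmod : n % 4 = (n.minFac % 4 * (t % 4)) % 4 := by
        conv_lhs => rw [ht]
        rw [Nat.mul_mod]
      have hp41 : n.minFac % 4 = 1 := by omega
      rw [hp41] at hmod
      have ht4 : t % 4 = 3 := by omega
      obtain ⟨q, hq, hqd, hq4⟩ := ih t htlt ht4
      exact ⟨q, hq, hqd.trans ⟨n.minFac, by rw [mul_comm]; exact ht⟩, hq4⟩

lemma exists_prime_8 : ∀ n : ℕ, (n % 8 = 5 ∨ n % 8 = 7) →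
    ∃ p, p.Prime ∧ p ∣ n ∧ (p % 8 = 5 ∨ p % 8 = 7) := by
  intro n
  induction n using Nat.strong_induction_on with
  | _ n ih =>
    intro hn
    have hn1 : n ≠ 1 := by omega
    have hp := Nat.minFac_prime hn1
    have hpd : n.minFac ∣ n := Nat.minFac_dvd n
    have hp2 : n.minFac % 2 = 1 := by
      have hne : n.minFac ≠ 2 := fun h2 => by
        have : ¬ 2 ∣ n := by omega
        exact this (h2 ▸ hpd)
      exact Nat.odd_iff.mp (hp.odd_of_ne_two hne)
    by_cases hp8 : n.minFac % 8 = 5 ∨ n.minFac % 8 = 7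
    · exact ⟨n.minFac, hp, hpd, hp8⟩
    · obtain ⟨t, ht⟩ := hpd
      have ht0 : t ≠ 0 := by rintro rfl; omega
      have htlt : t < n := by
        rw [ht]
        nlinarith [hp.two_le, Nat.pos_of_ne_zero ht0]
      have hmod : n % 8 = (n.minFac % 8 * (t % 8)) % 8 := by
        conv_lhs => rw [ht]
        rw [Nat.mul_mod]
      have hp8' : n.minFac % 8 = 1 ∨ n.minFac % 8 = 3 := by omega
      have ht8 : t % 8 = 5 ∨ t % 8 = 7 := by
        rcases hp8' with h1 | h3
        · rw [h1] at hmod; omega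
        · rw [h3] at hmod; omega
      obtain ⟨q, hq, hqd, hq8⟩ := ih t htlt ht8
      exact ⟨q, hq, hqd.trans ⟨n.minFac, by rw [mul_comm]; exact ht⟩, hq8⟩

/-- A quasiperfect number (σ(N) = 2N + 1) is an odd perfect square. -/
theorem quasiperfect_odd_square (N : ℕ) (hN : 0 < N) (h : sigma N = 2 * N + 1) :
    Odd N ∧ IsSquare N := by
  have hN0 : N ≠ 0 := hN.ne'
  set a := N.factorization 2 with ha
  set m := ordCompl[2] N with hmdef
  have hm0 : m ≠ 0 := (Nat.ordCompl_pos 2 hN0).ne'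
  have hNm : 2 ^ a * m = N := Nat.ordProj_mul_ordCompl_eq_self N 2
  -- σ N is odd, so m is a square
  have hodd : Odd (sigma N) := by rw [h]; exact ⟨N, by ring⟩
  have hcard : Odd m.divisors.card := by
    unfold sigma at hodd
    rw [Finset.odd_sum_iff_odd_card_odd] at hodd
    have heq := odd_divisors_eq hN0
    simp only [← hmdef] at heq
    rwa [heq] at hodd
  obtain ⟨k, hk⟩ := square_of_odd_card_divisors hm0 hcard
  -- multiplicativity
  have hco : Nat.Coprime (2 ^ a) m :=
    (Nat.coprime_ordCompl Nat.prime_two hN0).pow_left a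
  have hsig : sigma N = (2 ^ (a + 1) - 1) * sigma m := by
    have h1 : sigma N = ArithmeticFunction.sigma 1 N :=
      (ArithmeticFunction.sigma_one_apply N).symm
    have h2 : sigma m = ArithmeticFunction.sigma 1 m :=
      (ArithmeticFunction.sigma_one_apply m).symm
    rw [h1, h2, ← hNm, ArithmeticFunction.isMultiplicative_sigma.map_mul_of_coprime hco,
      ArithmeticFunction.sigma_one_apply_prime_pow Nat.prime_two, geom2]
  have hMdvd : (2 ^ (a + 1) - 1) ∣ 2 * N + 1 := ⟨sigma m, by rw [← h, hsig]⟩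
  -- show a = 0
  have ha0 : a = 0 := by
    by_contra hane
    have ha1 : 1 ≤ a := by omega
    rcases Nat.even_or_odd a with haeven | haodd
    · -- a even, a ≥ 2 : 2N+1 = 2x²+1, M ≡ 7 mod 8
      obtain ⟨b, hb⟩ := haeven
      have hM8 : (2 ^ (a + 1) - 1) % 8 = 7 := by
        have hpe : 2 ^ (a + 1) = 8 * 2 ^ (a - 2) := by
          rw [show a + 1 = 3 + (a - 2) by omega, pow_add]; norm_num
        have h1 : 1 ≤ 2 ^ (a - 2) := Nat.one_le_two_pow
        omega
      obtain ⟨p, hp, hpM, hp8⟩ := exists_prime_8 _ (Or.inr hM8)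
      have hpdvd : p ∣ 2 * N + 1 := hpM.trans hMdvd
      have hNx : 2 * N + 1 = 2 * ((2 ^ b * k) * (2 ^ b * k)) + 1 := by
        rw [← hNm, hk, hb]; ring_nf
      haveI : Fact p.Prime := ⟨hp⟩
      have hp2 : p ≠ 2 := by omega
      have hz : ((2 * ((2 ^ b * k) * (2 ^ b * k)) + 1 : ℕ) : ZMod p) = 0 := by
        rw [ZMod.natCast_eq_zero_iff]
        rwa [← hNx]
      push_cast at hz
      have hsq : IsSquare (-2 : ZMod p) :=
        ⟨2 * ((2 ^ b * k : ℕ) : ZMod p), by push_cast; linear_combination -2 * hz⟩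
      rw [ZMod.exists_sq_eq_neg_two_iff hp2] at hsq
      omega
    · -- a odd : 2N+1 = x²+1, M ≡ 3 mod 4
      obtain ⟨b, hb⟩ := haodd
      have hM4 : (2 ^ (a + 1) - 1) % 4 = 3 := by
        have hpe : 2 ^ (a + 1) = 4 * 2 ^ (a - 1) := by
          rw [show a + 1 = 2 + (a - 1) by omega, pow_add]; norm_num
        have h1 : 1 ≤ 2 ^ (a - 1) := Nat.one_le_two_pow
        omega
      obtain ⟨p, hp, hpM, hp4⟩ := exists_prime_4 _ hM4
      have hpdvd : p ∣ 2 * N + 1 := hpM.trans hMdvd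
      have hNx : 2 * N + 1 = (2 ^ (b + 1) * k) * (2 ^ (b + 1) * k) + 1 := by
        rw [← hNm, hk, hb]; ring_nf
      haveI : Fact p.Prime := ⟨hp⟩
      have hz : (((2 ^ (b + 1) * k) * (2 ^ (b + 1) * k) + 1 : ℕ) : ZMod p) = 0 := by
        rw [ZMod.natCast_eq_zero_iff]
        rwa [← hNx]
      push_cast at hz
      have hsq : IsSquare (-1 : ZMod p) :=
        ⟨((2 ^ (b + 1) * k : ℕ) : ZMod p), by push_cast; linear_combination -hz⟩
      rw [ZMod.exists_sq_eq_neg_one_iff] at hsq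
      exact hsq hp4
  -- conclude
  have hNeq : N = m := by rw [← hNm, ha0, pow_zero, one_mul]
  constructor
  · rw [Nat.odd_iff]
    have h2 : ¬ 2 ∣ m := Nat.not_dvd_ordCompl Nat.prime_two hN0
    rw [hNeq]
    omega
  · rw [hNeq]; exact ⟨k, hk⟩
end

section
/- Let m be even, n odd, with m and n coprime, and suppose σ(m)σ(n) = (m+n)². Then m = 2A² and n = B² for some odd integers A and B. -/
private lemma odd_of_dvd_odd {d n : ℕ} (hn : Odd n) (h : d ∣ n) : Odd d := by
  rw [Nat.odd_iff] at hn ⊢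
  by_contra hd
  have : (2 : ℕ) ∣ d := by omega
  have := this.trans h
  omega

private lemma sum_range_two_pow (a : ℕ) :
    ∑ k ∈ Finset.range (a + 1), 2 ^ k = 2 ^ (a + 1) - 1 := by
  induction a with
  | zero => simp
  | succ b ih =>
    rw [Finset.sum_range_succ, ih]
    have h1 : 1 ≤ 2 ^ (b + 1) := Nat.one_le_two_pow
    have h2 : 2 ^ (b + 1 + 1) = 2 * 2 ^ (b + 1) := by ring
    omega

private lemma sigma_two_pow (a : ℕ) : sigma (2 ^ a) = 2 ^ (a + 1) - 1 := by
  unfold sigma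
  rw [Nat.sum_divisors_prime_pow Nat.prime_two]
  simpa using sum_range_two_pow a

private lemma isSquare_of_odd_sigma {u : ℕ} (hu : 0 < u) (huo : Odd u)
    (hs : Odd (sigma u)) : ∃ c : ℕ, Odd c ∧ u = c ^ 2 := by
  have hcard : Odd u.divisors.card := by
    have h1 : sigma u % 2 = u.divisors.card % 2 := by
      unfold sigma
      rw [Finset.sum_nat_mod]
      have hc : ∀ d ∈ u.divisors, d % 2 = 1 := fun d hd =>
        Nat.odd_iff.mp (odd_of_dvd_odd huo (Nat.dvd_of_mem_divisors hd))
      rw [Finset.sum_congr rfl hc, Finset.sum_const, smul_eq_mul, mul_one]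
    rw [Nat.odd_iff] at hs ⊢
    omega
  have heven : ∀ p, Even (u.factorization p) := by
    intro p
    by_cases hp : p ∈ u.primeFactors
    · have hdvd : (u.factorization p + 1) ∣ u.divisors.card := by
        rw [Nat.card_divisors hu.ne']
        exact Finset.dvd_prod_of_mem _ hp
      have hodd : Odd (u.factorization p + 1) := odd_of_dvd_odd hcard hdvd
      rw [Nat.odd_iff] at hodd
      rw [Nat.even_iff]
      omega
    · rw [← Nat.support_factorization, Finsupp.notMem_support_iff] at hp
      simp [hp]
  have hsq : u = (u.factorization.prod fun p k => p ^ (k / 2)) ^ 2 := by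
    conv_lhs => rw [← Nat.factorization_prod_pow_eq_self hu.ne']
    rw [Finsupp.prod, Finsupp.prod, ← Finset.prod_pow]
    refine Finset.prod_congr rfl fun p _ => ?_
    rw [← pow_mul]
    congr 1
    obtain ⟨t, ht⟩ := heven p
    omega
  refine ⟨u.factorization.prod fun p k => p ^ (k / 2), ?_, hsq⟩
  refine odd_of_dvd_odd huo ⟨u.factorization.prod fun p k => p ^ (k / 2), ?_⟩
  conv_lhs => rw [hsq]
  ring

private lemma exists_prime_mod4 : ∀ M : ℕ, M % 4 = 3 →
    ∃ q : ℕ, q.Prime ∧ q ∣ M ∧ q % 4 = 3 := by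
  intro M
  induction M using Nat.strong_induction_on with
  | _ M ih =>
    intro hM
    have hM1 : M ≠ 1 := by omega
    obtain ⟨p, hp, hpd⟩ : ∃ p : ℕ, p.Prime ∧ p ∣ M :=
      ⟨M.minFac, Nat.minFac_prime hM1, Nat.minFac_dvd M⟩
    by_cases h3 : p % 4 = 3
    · exact ⟨p, hp, hpd, h3⟩
    · have hpodd : p % 2 = 1 := by
        rcases Nat.Prime.eq_two_or_odd hp with h2 | h1
        · exfalso; subst h2; obtain ⟨c, hc⟩ := hpd; omega
        · exact h1
      obtain ⟨k, hMk⟩ := hpd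
      have hk0 : k ≠ 0 := by rintro rfl; omega
      have hklt : k < M := by
        have h1k : 1 ≤ k := by omega
        have := hp.one_lt
        calc k = 1 * k := (one_mul k).symm
        _ < p * k := by exact Nat.mul_lt_mul_of_lt_of_le this (le_refl k) (by omega)
        _ = M := hMk.symm
      have hmod : M % 4 = p % 4 * (k % 4) % 4 := by rw [hMk, Nat.mul_mod]
      have hp41 : p % 4 = 1 := by omega
      have hk4 : k % 4 = 3 := by rw [hp41] at hmod; omega
      obtain ⟨q, hq, hqk, hq4⟩ := ih k hklt hk4
      exact ⟨q, hq, hqk.trans ⟨p, by rw [hMk, mul_comm]⟩, hq4⟩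

private lemma mod8_of_prime_factors : ∀ M : ℕ, Odd M →
    (∀ q : ℕ, q.Prime → q ∣ M → q % 8 = 1 ∨ q % 8 = 3) →
    M % 8 = 1 ∨ M % 8 = 3 := by
  intro M
  induction M using Nat.strong_induction_on with
  | _ M ih =>
    intro hModd hall
    rcases eq_or_ne M 1 with rfl | hM1
    · left; rfl
    have hM0 : M ≠ 0 := by
      rintro rfl
      rw [Nat.odd_iff] at hModd
      omega
    obtain ⟨p, hp, hpd⟩ : ∃ p : ℕ, p.Prime ∧ p ∣ M :=
      ⟨M.minFac, Nat.minFac_prime hM1, Nat.minFac_dvd M⟩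
    have hpm := hall _ hp hpd
    obtain ⟨k, hMk⟩ := hpd
    have hk0 : k ≠ 0 := by rintro rfl; omega
    have hklt : k < M := by
      have := hp.one_lt
      calc k = 1 * k := (one_mul k).symm
      _ < p * k := by exact Nat.mul_lt_mul_of_lt_of_le this (le_refl k) (by omega)
      _ = M := hMk.symm
    have hkodd : Odd k := (Nat.odd_mul.mp (hMk ▸ hModd)).2
    have hkall : ∀ q : ℕ, q.Prime → q ∣ k → q % 8 = 1 ∨ q % 8 = 3 :=
      fun q hq hqd => hall q hq (hqd.trans ⟨p, by rw [hMk, mul_comm]⟩)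
    have hkres := ih k hklt hkodd hkall
    have hmod : M % 8 = p % 8 * (k % 8) % 8 := by rw [hMk, Nat.mul_mod]
    rcases hpm with h1 | h1 <;> rcases hkres with h2 | h2 <;>
      rw [h1, h2] at hmod <;> omega

/-- If m is even, n odd, coprime, and σ(m)σ(n) = (m+n)², then
    m = 2A² and n = B² with A, B odd. -/
theorem kanold_structure (m n : ℕ) (hm : 0 < m) (hn : 0 < n)
    (hme : Even m) (hno : Odd n) (hcop : Nat.Coprime m n)
    (h : sigma m * sigma n = (m + n) ^ 2) :
    ∃ A B : ℕ, Odd A ∧ Odd B ∧ m = 2 * A ^ 2 ∧ n = B ^ 2 := by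
  have hmn_odd : Odd (m + n) := hme.add_odd hno
  have hsq_odd : Odd (sigma m * sigma n) := by
    rw [h]; exact hmn_odd.pow
  have hσm : Odd (sigma m) := (Nat.odd_mul.mp hsq_odd).1
  have hσn : Odd (sigma n) := (Nat.odd_mul.mp hsq_odd).2
  obtain ⟨B, hBodd, hnB⟩ := isSquare_of_odd_sigma hn hno hσn
  -- decompose m = 2^a * u with u odd
  set a := m.factorization 2 with ha
  have hm2 : 2 ∣ m := hme.two_dvd
  have ha1 : 1 ≤ a := Nat.Prime.factorization_pos_of_dvd Nat.prime_two hm.ne' hm2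
  set u := m / 2 ^ a with hudef
  have hmu : m = 2 ^ a * u := (Nat.ordProj_mul_ordCompl_eq_self m 2).symm
  have hu_pos : 0 < u := Nat.ordCompl_pos 2 hm.ne'
  have hu_nd : ¬ 2 ∣ u := Nat.not_dvd_ordCompl Nat.prime_two hm.ne'
  have hu_odd : Odd u := by rw [Nat.odd_iff]; omega
  have hcop2 : Nat.Coprime (2 ^ a) u :=
    Nat.Coprime.pow_left a ((Nat.Prime.coprime_iff_not_dvd Nat.prime_two).mpr hu_nd)
  have hσ_split : sigma m = sigma (2 ^ a) * sigma u := by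
    rw [hmu]; exact hcop2.sum_divisors_mul
  rw [sigma_two_pow] at hσ_split
  have hσu : Odd (sigma u) := by
    rw [hσ_split] at hσm
    exact (Nat.odd_mul.mp hσm).2
  obtain ⟨C, hCodd, huC⟩ := isSquare_of_odd_sigma hu_pos hu_odd hσu
  rcases eq_or_lt_of_le ha1 with ha1' | ha2
  · -- a = 1 : done
    exact ⟨C, B, hCodd, hBodd, by rw [hmu, huC, ← ha1', pow_one], hnB⟩
  -- a ≥ 2 : contradiction
  exfalso
  set M := 2 ^ (a + 1) - 1 with hMdef
  have hMpow : M + 1 = 2 ^ (a + 1) := by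
    have : 1 ≤ 2 ^ (a + 1) := Nat.one_le_two_pow
    omega
  have hModd : Odd M := by
    have : (2:ℕ) ∣ 2 ^ (a + 1) := dvd_pow_self 2 (by omega)
    rw [Nat.odd_iff]; omega
  have hMdvd : M ∣ (m + n) ^ 2 := by
    refine dvd_trans ⟨sigma u, hσ_split⟩ ⟨sigma n, h.symm⟩
  -- common facts for a prime divisor q of M
  have key : ∀ q : ℕ, q.Prime → q ∣ M → q ∣ m + n ∧ ¬ q ∣ m ∧ ¬ q ∣ n ∧ q ≠ 2 := by
    intro q hq hqM
    have hqmn : q ∣ m + n := hq.dvd_of_dvd_pow (hqM.trans hMdvd)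
    have hq2 : q ≠ 2 := by
      rintro rfl
      have := (Nat.odd_iff.mp (odd_of_dvd_odd hModd hqM))
      omega
    have hgcd : ¬ (q ∣ m ∧ q ∣ n) := by
      rintro ⟨h1, h2⟩
      have := Nat.dvd_gcd h1 h2
      rw [hcop] at this
      exact hq.one_lt.ne' (Nat.dvd_one.mp this)
    constructor
    · exact hqmn
    refine ⟨fun hqm => hgcd ⟨hqm, ?_⟩, fun hqn => hgcd ⟨?_, hqn⟩, hq2⟩
    · have := Nat.dvd_sub hqmn hqm
      simpa using this
    · have := Nat.dvd_sub hqmn hqn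
      simpa using this
  rcases Nat.even_or_odd a with haeven | haodd
  · -- a even : m + n = x^2 + B^2, use prime q ≡ 3 mod 4 dividing M
    obtain ⟨t, hat⟩ := haeven
    have hM4 : M % 4 = 3 := by
      have h4 : (4:ℕ) ∣ 2 ^ (a + 1) := by
        calc (4:ℕ) = 2 ^ 2 := by norm_num
        _ ∣ 2 ^ (a + 1) := pow_dvd_pow 2 (by omega)
      omega
    obtain ⟨q, hq, hqM, hq4⟩ := exists_prime_mod4 M hM4
    obtain ⟨hqmn, hqm, hqn, hq2⟩ := key q hq hqM
    set x := 2 ^ t * C with hx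
    have hexp : m + n = x ^ 2 + B ^ 2 := by
      rw [hmu, huC, hnB, hat, hx]
      ring
    haveI := Fact.mk hq
    have h0 : (x : ZMod q) ^ 2 + (B : ZMod q) ^ 2 = 0 := by
      have := (ZMod.natCast_eq_zero_iff (m + n) q).mpr hqmn
      rw [hexp] at this
      push_cast at this
      exact this
    have hB0 : (B : ZMod q) ≠ 0 := by
      intro hB
      apply hqn
      rw [hnB]
      exact dvd_pow ((ZMod.natCast_eq_zero_iff B q).mp hB) two_ne_zero
    have hsqr : IsSquare (-1 : ZMod q) := by
      refine ⟨(x : ZMod q) * (B : ZMod q)⁻¹, ?_⟩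
      field_simp
      linear_combination -h0
    exact (ZMod.exists_sq_eq_neg_one_iff.mp hsqr) hq4
  · -- a odd (≥ 3) : m + n = 2x^2 + B^2, use prime q with q % 8 ∉ {1,3}
    obtain ⟨t, hat⟩ := haodd
    have ht1 : 1 ≤ t := by omega
    have hM8 : M % 8 = 7 := by
      have h8 : (8:ℕ) ∣ 2 ^ (a + 1) := by
        calc (8:ℕ) = 2 ^ 3 := by norm_num
        _ ∣ 2 ^ (a + 1) := pow_dvd_pow 2 (by omega)
      omega
    obtain ⟨q, hq, hqM, hq8⟩ :
        ∃ q : ℕ, q.Prime ∧ q ∣ M ∧ ¬(q % 8 = 1 ∨ q % 8 = 3) := by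
      by_contra hcon
      push_neg at hcon
      have := mod8_of_prime_factors M hModd fun q hq hqd => (hcon q hq hqd)
      omega
    obtain ⟨hqmn, hqm, hqn, hq2⟩ := key q hq hqM
    set x := 2 ^ t * C with hx
    have hexp : m + n = 2 * x ^ 2 + B ^ 2 := by
      rw [hmu, huC, hnB, hat, hx]
      ring
    haveI := Fact.mk hq
    have h0 : 2 * (x : ZMod q) ^ 2 + (B : ZMod q) ^ 2 = 0 := by
      have := (ZMod.natCast_eq_zero_iff (m + n) q).mpr hqmn
      rw [hexp] at this
      push_cast at this
      exact this
    have hB0 : (B : ZMod q) ≠ 0 := by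
      intro hB
      apply hqn
      rw [hnB]
      exact dvd_pow ((ZMod.natCast_eq_zero_iff B q).mp hB) two_ne_zero
    have hsqr : IsSquare (-2 : ZMod q) := by
      refine ⟨(2 * x : ZMod q) * (B : ZMod q)⁻¹, ?_⟩
      field_simp
      linear_combination (-2 : ZMod q) * h0
    exact hq8 ((ZMod.exists_sq_eq_neg_two_iff hq2).mp hsqr)
end

section
/- If N = (p₁p₂···p_t)^{2β} with p₁ < p₂ < ··· < p_t distinct primes is quasiperfect, then 3 divides 2β + 1. -/
open Finset

lemma sigma_eq_sigma_one (n : ℕ) : sigma n = ArithmeticFunction.sigma 1 n :=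
  (ArithmeticFunction.sigma_one_apply n).symm

lemma sigma_prime_pow {p : ℕ} (hp : p.Prime) (k : ℕ) :
    sigma (p ^ k) = ∑ i ∈ range (k + 1), p ^ i := by
  rw [sigma_eq_sigma_one, ArithmeticFunction.sigma_one_apply_prime_pow hp]

lemma sigma_prod_pow_of_injective {ι : Type*} [Fintype ι] {p : ι → ℕ} (hp : ∀ i, (p i).Prime)
    (hinj : Function.Injective p) (k : ℕ) :
    sigma ((∏ i, p i) ^ k) = ∏ i, sigma (p i ^ k) := by
  have hcop : ((univ : Finset ι) : Set ι).Pairwise (Function.onFun Nat.Coprime fun i => p i ^ k) :=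
    fun i _ j _ hij => ((Nat.coprime_primes (hp i) (hp j)).mpr (hinj.ne hij)).pow k k
  simp only [sigma_eq_sigma_one, ← prod_pow]
  exact ArithmeticFunction.isMultiplicative_sigma.map_prod _ univ hcop

lemma geom_sum_range_two_mul_add_one_of_sq_eq_one {R : Type*} [CommRing R] {x : R}
    (hx : x ^ 2 = 1) (b : ℕ) : ∑ i ∈ range (2 * b + 1), x ^ i = b * (1 + x) + 1 := by
  induction b with
  | zero => simp
  | succ b ih =>
    have heven : x ^ (2 * b) = 1 := by rw [pow_mul, hx, one_pow]
    rw [show 2 * (b + 1) + 1 = 2 * b + 1 + 1 + 1 by ring, sum_range_succ, sum_range_succ, ih]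
    push_cast
    linear_combination (x + x ^ 2) * heven + hx

lemma cast_sigma_prime_pow_two_mul {R : Type*} [CommRing R] {p : ℕ} (hp : p.Prime)
    (hsq : (p : R) ^ 2 = 1) (b : ℕ) : (sigma (p ^ (2 * b)) : R) = b * (1 + p) + 1 := by
  rw [sigma_prime_pow hp]
  push_cast
  exact geom_sum_range_two_mul_add_one_of_sq_eq_one hsq b

lemma Nat.Prime.mod_eight_of_dvd_two_mul_sq_add_one {q s : ℕ} (hq : q.Prime)
    (hdvd : q ∣ 2 * s ^ 2 + 1) : q % 8 = 1 ∨ q % 8 = 3 := by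
  have hq2 : q ≠ 2 := by
    rintro rfl
    omega
  have h0 : ((2 * s ^ 2 + 1 : ℕ) : ZMod q) = 0 := (ZMod.natCast_eq_zero_iff _ _).mpr hdvd
  push_cast at h0
  have := Fact.mk hq
  exact (ZMod.exists_sq_eq_neg_two_iff hq2).mp
    ⟨2 * (s : ZMod q), by linear_combination (-2 : ZMod q) * h0⟩

lemma mod_eight_of_dvd_two_mul_sq_add_one {d s : ℕ} (hdvd : d ∣ 2 * s ^ 2 + 1) :
    d % 8 = 1 ∨ d % 8 = 3 := by
  induction d using induction_on_primes with
  | zero => simp at hdvd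
  | one => simp
  | prime_mul q a hq ih =>
    have hq8 := hq.mod_eight_of_dvd_two_mul_sq_add_one (dvd_of_mul_right_dvd hdvd)
    have ha8 := ih (dvd_of_mul_left_dvd hdvd)
    rw [Nat.mul_mod]
    rcases hq8 with h | h <;> rcases ha8 with h' | h' <;> rw [h, h'] <;> norm_num

lemma sigma_two_pow_mod_eight {k : ℕ} (hk : 2 ≤ k) : sigma (2 ^ k) % 8 = 7 := by
  have hgeom : sigma (2 ^ k) + 1 = 2 ^ (k + 1) := by
    rw [sigma_prime_pow Nat.prime_two, Nat.geomSum_eq le_rfl]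
    have := Nat.one_le_two_pow (n := k + 1)
    omega
  have h8 : 2 ^ (k + 1) = 8 * 2 ^ (k - 2) := by
    rw [show k + 1 = 3 + (k - 2) by omega, pow_add]
    norm_num
  omega

lemma sigma_prime_pow_two_mul_mod_four {p b : ℕ} (hp : p.Prime) (hp2 : p ≠ 2) (hb : Even b) :
    sigma (p ^ (2 * b)) % 4 = 1 := by
  obtain ⟨k, rfl⟩ := hp.odd_of_ne_two hp2
  obtain ⟨c, rfl⟩ := hb
  have h4 : (4 : ZMod 4) = 0 := rfl
  have hsq : ((2 * k + 1 : ℕ) : ZMod 4) ^ 2 = 1 := by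
    push_cast
    linear_combination (k ^ 2 + k : ZMod 4) * h4
  rw [← ZMod.val_natCast, cast_sigma_prime_pow_two_mul hp hsq]
  push_cast
  rw [show ((c : ZMod 4) + c) * (1 + (2 * k + 1)) + 1 = 1 by linear_combination (c * (k + 1)) * h4]
  rfl

lemma sigma_three_pow_two_mul_mod_eight {b : ℕ} (hb : Odd b) : sigma (3 ^ (2 * b)) % 8 = 5 := by
  obtain ⟨c, rfl⟩ := hb
  have h8 : (8 : ZMod 8) = 0 := rfl
  rw [← ZMod.val_natCast, cast_sigma_prime_pow_two_mul Nat.prime_three (by decide)]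
  push_cast
  rw [show (2 * (c : ZMod 8) + 1) * (1 + 3) + 1 = 5 by linear_combination c * h8]
  rfl

lemma three_dvd_two_mul_add_one_of_three_dvd_sigma {p b : ℕ} (hp : p.Prime) (hp3 : p ≠ 3)
    (h : 3 ∣ sigma (p ^ (2 * b))) : 3 ∣ 2 * b + 1 := by
  have hp0 : (p : ZMod 3) ≠ 0 := fun h0 =>
    hp3 ((Nat.prime_dvd_prime_iff_eq Nat.prime_three hp).mp
      ((ZMod.natCast_eq_zero_iff _ _).mp h0)).symm
  have hsq : ∀ x : ZMod 3, x ≠ 0 → x ^ 2 = 1 := by decide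
  have hsum := (ZMod.natCast_eq_zero_iff _ 3).mpr h
  rw [cast_sigma_prime_pow_two_mul hp (hsq _ hp0)] at hsum
  have key : ∀ y x : ZMod 3, x ≠ 0 → y * (1 + x) + 1 = 0 → 2 * y + 1 = 0 := by decide
  exact (ZMod.natCast_eq_zero_iff _ 3).mp (by exact_mod_cast key _ _ hp0 hsum)

lemma three_dvd_two_mul_sq_add_one {s : ℕ} (hs : ¬ 3 ∣ s) : 3 ∣ 2 * s ^ 2 + 1 := by
  have hs0 : (s : ZMod 3) ≠ 0 := fun h0 => hs ((ZMod.natCast_eq_zero_iff _ _).mp h0)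
  have key : ∀ x : ZMod 3, x ≠ 0 → 2 * x ^ 2 + 1 = 0 := by decide
  exact (ZMod.natCast_eq_zero_iff _ 3).mp (by exact_mod_cast key _ hs0)

lemma exists_eq_of_prime_dvd_prod_pow {ι : Type*} [Fintype ι] {p : ι → ℕ}
    (hp : ∀ i, (p i).Prime) {q k : ℕ} (hq : q.Prime) (h : q ∣ (∏ i, p i) ^ k) : ∃ i, p i = q := by
  obtain ⟨i, -, hi⟩ := (hq.prime.dvd_finsetProd_iff _).mp (hq.dvd_of_dvd_pow h)
  exact ⟨i, ((Nat.prime_dvd_prime_iff_eq hq (hp i)).mp hi).symm⟩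

lemma sigma_prod_pow_two_mul_mod_four {ι : Type*} [Fintype ι] {p : ι → ℕ}
    (hp : ∀ i, (p i).Prime) (hp2 : ∀ i, p i ≠ 2) (hinj : Function.Injective p) {b : ℕ}
    (hb : Even b) : sigma ((∏ i, p i) ^ (2 * b)) % 4 = 1 := by
  rw [sigma_prod_pow_of_injective hp hinj, ← ZMod.val_natCast, Nat.cast_prod]
  rw [prod_eq_one fun i _ => ?_]
  · rfl
  rw [← ZMod.natCast_mod, sigma_prime_pow_two_mul_mod_four (hp i) (hp2 i) hb, Nat.cast_one]

/-- If N = (p₁p₂⋯p_t)^{2β} with p₁ < ⋯ < p_t primes is quasiperfect,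
    then 3 divides 2β + 1. -/
theorem quasiperfect_equal_exponents (t β N : ℕ) (p : Fin t → ℕ)
    (hp : ∀ i, (p i).Prime) (hmono : StrictMono p)
    (hN : N = (∏ i, p i) ^ (2 * β)) (hqp : sigma N = 2 * N + 1) :
    3 ∣ 2 * β + 1 := by
  have hσ : sigma N = ∏ i, sigma (p i ^ (2 * β)) :=
    hN ▸ sigma_prod_pow_of_injective hp hmono.injective _
  have hNsq : N = ((∏ i, p i) ^ β) ^ 2 := by rw [hN, ← pow_mul, mul_comm]
  have hmod8 (i : Fin t) : sigma (p i ^ (2 * β)) % 8 = 1 ∨ sigma (p i ^ (2 * β)) % 8 = 3 :=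
    mod_eight_of_dvd_two_mul_sq_add_one (hNsq ▸ hqp ▸ hσ ▸ dvd_prod_of_mem _ (mem_univ i))
  have hβ : β ≠ 0 := by
    rintro rfl
    simp [hN, sigma] at hqp
  have hp2 (i : Fin t) : p i ≠ 2 := fun h2 => by
    have := sigma_two_pow_mod_eight (k := 2 * β) (by omega)
    have := h2 ▸ hmod8 i
    omega
  have hβodd : Odd β := by
    refine Nat.not_even_iff_odd.mp fun hβeven => ?_
    have hσ4 := sigma_prod_pow_two_mul_mod_four hp hp2 hmono.injective hβeven
    have hN2 : ¬ 2 ∣ N := fun h =>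
      (exists_eq_of_prime_dvd_prod_pow hp Nat.prime_two (hN ▸ h)).elim hp2
    rw [← hN, hqp] at hσ4
    omega
  have hp3 (i : Fin t) : p i ≠ 3 := fun h3 => by
    have := sigma_three_pow_two_mul_mod_eight hβodd
    have := h3 ▸ hmod8 i
    omega
  have h3 : 3 ∣ ∏ i, sigma (p i ^ (2 * β)) := hσ ▸ hqp ▸ hNsq ▸ three_dvd_two_mul_sq_add_one
    fun h => (exists_eq_of_prime_dvd_prod_pow hp Nat.prime_three h).elim hp3
  obtain ⟨i, -, hi⟩ := (Nat.prime_three.prime.dvd_finsetProd_iff _).mp h3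
  exact three_dvd_two_mul_add_one_of_three_dvd_sigma (hp i) (hp3 i) hi
end
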